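/- Let w, v, u ∈ Q and let 1 ≤ i, k, p ≤ m with i ≠ k and k ≠ p. For all scalars a, b, c, a', b', c' ∈ A satisfying abc = a'b'c' and a²bc = a'²b'c', the triple commutators [E_{i,a·w}, [E*_{k,b·v}, E*_{p,c·u}]] and [E_{i,a'·w}, [E*_{k,b'·v}, E*_{p,c'·u}]] are equal as automorphisms of M. -/

import Mathlib

open QuadraticMap
open scoped commutatorElement

/-- The DSER elementary orthogonal transformation `E_{i,w}` on `M = Q ⊕ P ⊕ P*`,
`P = A^m`:  `E_{i,w}(z,x,f) = (z − f(xᵢ)•w, x + ⟨w,z⟩•xᵢ − f(xᵢ)·q(w)•xᵢ, f)`. -/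
noncomputable def Eplus {A Q : Type*} [CommRing A] [AddCommGroup Q] [Module A Q]
    {m : ℕ} (q : QuadraticForm A Q) (i : Fin m) (w : Q) :
    (Q × (Fin m → A) × (Fin m → A)) ≃ₗ[A] (Q × (Fin m → A) × (Fin m → A)) where
  toFun p := (p.1 - p.2.2 i • w,
    p.2.1 + polar ⇑q w p.1 • (Pi.single i 1 : Fin m → A)
      - (p.2.2 i * q w) • (Pi.single i 1 : Fin m → A),
    p.2.2)
  invFun p := (p.1 + p.2.2 i • w,
    p.2.1 - polar ⇑q w p.1 • (Pi.single i 1 : Fin m → A)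
      - (p.2.2 i * q w) • (Pi.single i 1 : Fin m → A),
    p.2.2)
  map_add' p p' := by
    obtain ⟨z, x, f⟩ := p
    obtain ⟨z', x', f'⟩ := p'
    refine Prod.ext ?_ (Prod.ext ?_ rfl)
    · show z + z' - (f i + f' i) • w = (z - f i • w) + (z' - f' i • w)
      module
    · show x + x' + polar ⇑q w (z + z') • (Pi.single i 1 : Fin m → A)
        - ((f i + f' i) * q w) • (Pi.single i 1 : Fin m → A) = _
      rw [polar_add_right]
      show _ = (x + polar ⇑q w z • (Pi.single i 1 : Fin m → A) - (f i * q w) • (Pi.single i 1 : Fin m → A))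
        + (x' + polar ⇑q w z' • (Pi.single i 1 : Fin m → A) - (f' i * q w) • (Pi.single i 1 : Fin m → A))
      module
  map_smul' a p := by
    obtain ⟨z, x, f⟩ := p
    refine Prod.ext ?_ (Prod.ext ?_ rfl)
    · show a • z - (a • f) i • w = a • (z - f i • w)
      simp only [Pi.smul_apply, smul_eq_mul]
      module
    · show a • x + polar ⇑q w (a • z) • (Pi.single i 1 : Fin m → A)
        - ((a • f) i * q w) • (Pi.single i 1 : Fin m → A)
        = a • (x + polar ⇑q w z • (Pi.single i 1 : Fin m → A) - (f i * q w) • (Pi.single i 1 : Fin m → A))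
      rw [polar_smul_right]
      simp only [Pi.smul_apply, smul_eq_mul]
      module
  left_inv p := by
    obtain ⟨z, x, f⟩ := p
    refine Prod.ext ?_ (Prod.ext ?_ rfl)
    · show z - f i • w + f i • w = z
      module
    · show x + polar ⇑q w z • (Pi.single i 1 : Fin m → A) - (f i * q w) • (Pi.single i 1 : Fin m → A)
        - polar ⇑q w (z - f i • w) • (Pi.single i 1 : Fin m → A)
        - (f i * q w) • (Pi.single i 1 : Fin m → A) = x
      rw [polar_sub_right, polar_smul_right, polar_self]
      simp only [smul_eq_mul]
      module
  right_inv p := by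
    obtain ⟨z, x, f⟩ := p
    refine Prod.ext ?_ (Prod.ext ?_ rfl)
    · show z + f i • w - f i • w = z
      module
    · show x - polar ⇑q w z • (Pi.single i 1 : Fin m → A) - (f i * q w) • (Pi.single i 1 : Fin m → A)
        + polar ⇑q w (z + f i • w) • (Pi.single i 1 : Fin m → A)
        - (f i * q w) • (Pi.single i 1 : Fin m → A) = x
      rw [polar_add_right, polar_smul_right, polar_self]
      simp only [smul_eq_mul]
      module

/-- The DSER elementary orthogonal transformation `E*_{i,w}` on `M = Q ⊕ P ⊕ P*`:
`E*_{i,w}(z,x,f) = (z − fᵢ(x)•w, x, f + ⟨w,z⟩•fᵢ − fᵢ(x)·q(w)•fᵢ)`. -/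
noncomputable def Estar {A Q : Type*} [CommRing A] [AddCommGroup Q] [Module A Q]
    {m : ℕ} (q : QuadraticForm A Q) (i : Fin m) (w : Q) :
    (Q × (Fin m → A) × (Fin m → A)) ≃ₗ[A] (Q × (Fin m → A) × (Fin m → A)) where
  toFun p := (p.1 - p.2.1 i • w,
    p.2.1,
    p.2.2 + polar ⇑q w p.1 • (Pi.single i 1 : Fin m → A)
      - (p.2.1 i * q w) • (Pi.single i 1 : Fin m → A))
  invFun p := (p.1 + p.2.1 i • w,
    p.2.1,
    p.2.2 - polar ⇑q w p.1 • (Pi.single i 1 : Fin m → A)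
      - (p.2.1 i * q w) • (Pi.single i 1 : Fin m → A))
  map_add' p p' := by
    obtain ⟨z, x, f⟩ := p
    obtain ⟨z', x', f'⟩ := p'
    refine Prod.ext ?_ (Prod.ext rfl ?_)
    · show z + z' - (x i + x' i) • w = (z - x i • w) + (z' - x' i • w)
      module
    · show f + f' + polar ⇑q w (z + z') • (Pi.single i 1 : Fin m → A)
        - ((x i + x' i) * q w) • (Pi.single i 1 : Fin m → A) = _
      rw [polar_add_right]
      show _ = (f + polar ⇑q w z • (Pi.single i 1 : Fin m → A)
          - (x i * q w) • (Pi.single i 1 : Fin m → A))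
        + (f' + polar ⇑q w z' • (Pi.single i 1 : Fin m → A)
          - (x' i * q w) • (Pi.single i 1 : Fin m → A))
      module
  map_smul' a p := by
    obtain ⟨z, x, f⟩ := p
    refine Prod.ext ?_ (Prod.ext rfl ?_)
    · show a • z - (a • x) i • w = a • (z - x i • w)
      simp only [Pi.smul_apply, smul_eq_mul]
      module
    · show a • f + polar ⇑q w (a • z) • (Pi.single i 1 : Fin m → A)
        - ((a • x) i * q w) • (Pi.single i 1 : Fin m → A)
        = a • (f + polar ⇑q w z • (Pi.single i 1 : Fin m → A)
          - (x i * q w) • (Pi.single i 1 : Fin m → A))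
      rw [polar_smul_right]
      simp only [Pi.smul_apply, smul_eq_mul]
      module
  left_inv p := by
    obtain ⟨z, x, f⟩ := p
    refine Prod.ext ?_ (Prod.ext rfl ?_)
    · show z - x i • w + x i • w = z
      module
    · show f + polar ⇑q w z • (Pi.single i 1 : Fin m → A)
        - (x i * q w) • (Pi.single i 1 : Fin m → A)
        - polar ⇑q w (z - x i • w) • (Pi.single i 1 : Fin m → A)
        - (x i * q w) • (Pi.single i 1 : Fin m → A) = f
      rw [polar_sub_right, polar_smul_right, polar_self]
      simp only [smul_eq_mul]
      module
  right_inv p := by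
    obtain ⟨z, x, f⟩ := p
    refine Prod.ext ?_ (Prod.ext rfl ?_)
    · show z + x i • w - x i • w = z
      module
    · show f - polar ⇑q w z • (Pi.single i 1 : Fin m → A)
        - (x i * q w) • (Pi.single i 1 : Fin m → A)
        + polar ⇑q w (z + x i • w) • (Pi.single i 1 : Fin m → A)
        - (x i * q w) • (Pi.single i 1 : Fin m → A) = f
      rw [polar_add_right, polar_smul_right, polar_self]
      simp only [smul_eq_mul]
      module

/-!
`[E*_{k,v}, E*_{p,u}]` only shears the `P*`-coordinate, by `⟨v,u⟩ (x_k f_p − x_p f_k)`.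
Commuting this shear with `E_{i,w}` for `i ≠ k` gives an explicit map in which, once `w, v, u` are
scaled by `a, b, c`, the scalars occur only through `abc`, `a²bc` and `(abc)²`: the pairings
`⟨a w, z⟩` and `⟨b v, c u⟩` are multilinear while `q (a w) = a² q w`.
-/

section

variable {A Q : Type*} [CommRing A] [AddCommGroup Q] [Module A Q] {m : ℕ}
  (q : QuadraticForm A Q)

lemma Eplus_apply (i : Fin m) (w z : Q) (x f : Fin m → A) :
    Eplus q i w (z, x, f) = (z - f i • w,
      x + polar q w z • Pi.single i 1 - (f i * q w) • Pi.single i 1, f) := rfl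

lemma Estar_apply (i : Fin m) (w z : Q) (x f : Fin m → A) :
    Estar q i w (z, x, f) = (z - x i • w, x,
      f + polar q w z • Pi.single i 1 - (x i * q w) • Pi.single i 1) := rfl

lemma Eplus_inv (i : Fin m) (w : Q) : (Eplus q i w)⁻¹ = Eplus q i (-w) := by
  refine LinearEquiv.ext fun ⟨z, x, f⟩ => Prod.ext ?_ (Prod.ext ?_ rfl)
  · show z + f i • w = z - f i • -w
    module
  · show x - polar q w z • Pi.single i 1 - (f i * q w) • Pi.single i 1
      = x + polar q (-w) z • Pi.single i 1 - (f i * q (-w)) • Pi.single i 1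
    rw [polar_neg_left, QuadraticMap.map_neg]
    module

lemma Estar_inv (i : Fin m) (w : Q) : (Estar q i w)⁻¹ = Estar q i (-w) := by
  refine LinearEquiv.ext fun ⟨z, x, f⟩ => Prod.ext ?_ (Prod.ext rfl ?_)
  · show z + x i • w = z - x i • -w
    module
  · show f - polar q w z • Pi.single i 1 - (x i * q w) • Pi.single i 1
      = f + polar q (-w) z • Pi.single i 1 - (x i * q (-w)) • Pi.single i 1
    rw [polar_neg_left, QuadraticMap.map_neg]
    module

lemma commutator_Estar_Estar_apply (k p : Fin m) (v u z : Q) (x f : Fin m → A) :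
    ⁅Estar q k v, Estar q p u⁆ (z, x, f)
      = (z, x,
        f + (polar q v u * x k) • Pi.single p 1 - (polar q v u * x p) • Pi.single k 1) := by
  simp only [commutatorElement_def, Estar_inv, LinearEquiv.mul_apply, Estar_apply,
    polar_sub_right, polar_smul_right, polar_neg_left, polar_neg_right,
    polar_self, QuadraticMap.map_neg]
  rw [polar_comm q u v]
  refine Prod.ext ?_ (Prod.ext ?_ ?_) <;> dsimp only <;> match_scalars <;> ring

lemma commutator_Eplus_commutator_Estar_Estar_apply {i k : Fin m} (hik : i ≠ k) (p : Fin m)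
    (w v u z : Q) (x f : Fin m → A) :
    ⁅Eplus q i w, ⁅Estar q k v, Estar q p u⁆⁆ (z, x, f)
      = (z - (polar q v u * (Pi.single p 1 : Fin m → A) i * x k) • w,
         x - (polar q v u * (Pi.single p 1 : Fin m → A) i * x k * q w) • Pi.single i 1,
         f + (polar q v u * (Pi.single p 1 : Fin m → A) i * (polar q w z + f i * q w)
              - (polar q v u * (Pi.single p 1 : Fin m → A) i) ^ 2 * x k * q w)
           • Pi.single k 1) := by
  rw [commutatorElement_def, commutatorElement_inv]
  simp only [LinearEquiv.mul_apply, commutator_Estar_Estar_apply, Eplus_inv, Eplus_apply,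
    Pi.add_apply, Pi.sub_apply, Pi.smul_apply, smul_eq_mul,
    Pi.single_eq_of_ne hik, Pi.single_eq_of_ne hik.symm, Pi.single_comm i (1 : A) p,
    polar_sub_right, polar_smul_right, polar_neg_left, polar_neg_right, polar_self,
    QuadraticMap.map_neg, mul_zero, add_zero, sub_zero]
  rw [polar_comm q u v]
  refine Prod.ext ?_ (Prod.ext ?_ ?_) <;> dsimp only <;> match_scalars <;> ring

lemma commutator_Eplus_smul_commutator_Estar_smul_Estar_smul_apply {i k : Fin m} (hik : i ≠ k)
    (p : Fin m) (w v u z : Q) (a b c : A) (x f : Fin m → A) :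
    ⁅Eplus q i (a • w), ⁅Estar q k (b • v), Estar q p (c • u)⁆⁆ (z, x, f)
      = (z - (a * b * c * polar q v u * (Pi.single p 1 : Fin m → A) i * x k) • w,
         x - (a ^ 2 * b * c * polar q v u * (Pi.single p 1 : Fin m → A) i * x k * q w)
           • Pi.single i 1,
         f + (a * b * c * polar q v u * (Pi.single p 1 : Fin m → A) i * polar q w z
              + a ^ 2 * b * c * polar q v u * (Pi.single p 1 : Fin m → A) i * f i * q w
              - (a * b * c) ^ 2 * (polar q v u * (Pi.single p 1 : Fin m → A) i) ^ 2 * x k * q w)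
           • Pi.single k 1) := by
  rw [commutator_Eplus_commutator_Estar_Estar_apply q hik]
  simp only [polar_smul_left, polar_smul_right, QuadraticMap.map_smul, smul_eq_mul]
  refine Prod.ext ?_ (Prod.ext ?_ ?_) <;> dsimp only <;> match_scalars <;> ring

end

theorem triple_commutator_Eplus_EstarEstar_scaling_general
    {A Q : Type*} [CommRing A] [AddCommGroup Q] [Module A Q]
    {m : ℕ} (q : QuadraticForm A Q) (i k p : Fin m)
    (hik : i ≠ k) (w v u : Q)
    (a b c a' b' c' : A) (h1 : a * b * c = a' * b' * c')
    (h2 : a ^ 2 * b * c = a' ^ 2 * b' * c') :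
    ⁅Eplus q i (a • w), ⁅Estar q k (b • v), Estar q p (c • u)⁆⁆
      = ⁅Eplus q i (a' • w), ⁅Estar q k (b' • v), Estar q p (c' • u)⁆⁆ := by
  refine LinearEquiv.ext fun ⟨z, x, f⟩ => ?_
  rw [commutator_Eplus_smul_commutator_Estar_smul_Estar_smul_apply q hik,
    commutator_Eplus_smul_commutator_Estar_smul_Estar_smul_apply q hik, h1, h2]

theorem triple_commutator_Eplus_EstarEstar_scaling
    {A Q : Type*} [CommRing A] [Invertible (2 : A)] [AddCommGroup Q] [Module A Q]
    {m : ℕ} (q : QuadraticForm A Q) (i k p : Fin m)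
    (hik : i ≠ k) (hkp : k ≠ p) (w v u : Q)
    (a b c a' b' c' : A) (h1 : a * b * c = a' * b' * c')
    (h2 : a ^ 2 * b * c = a' ^ 2 * b' * c') :
    ⁅Eplus q i (a • w), ⁅Estar q k (b • v), Estar q p (c • u)⁆⁆
      = ⁅Eplus q i (a' • w), ⁅Estar q k (b' • v), Estar q p (c' • u)⁆⁆ :=
  triple_commutator_Eplus_EstarEstar_scaling_general q i k p hik w v u a b c a' b' c' h1 h2
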